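/- A quadratic normalisation (A, N) is of class (4,3) if and only if the domino rule is valid for N̄. -/

import Mathlib

/-- Apply `N` to the length-two factor of `w` at positions `i, i+1` (1-indexed). -/
def applyAt {A : Type*} (N : List A → List A) (i : ℕ) (w : List A) : List A :=
  w.take (i - 1) ++ N ((w.drop (i - 1)).take 2) ++ w.drop (i + 1)

/-- Apply `N` to length-two factors at the given sequence of positions,
leftmost position in the list applied first. -/
def applySeq {A : Type*} (N : List A → List A) (pos : List ℕ) (w : List A) : List A :=
  pos.foldl (fun v i => applyAt N i v) w

/-- The alternating sequence of positions `s, 3-s, s, ...` of length `k` (with `s ∈ {1,2}`). -/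
def altSeq : ℕ → ℕ → List ℕ
  | _, 0 => []
  | s, k + 1 => s :: altSeq (3 - s) k

/-- A quadratic normalisation: a length-preserving map, identity on letters,
satisfying `N(u|v|w) = N(u|N(v)|w)`, for which a word is normal iff all its
length-two factors are, and which is computed by finitely many applications
of its restriction to length-two factors. -/
structure QuadraticNormalisation {A : Type*} (N : List A → List A) : Prop where
  len : ∀ w : List A, (N w).length = w.length
  letter : ∀ a : A, N [a] = [a]
  mid : ∀ u v w : List A, N (u ++ v ++ w) = N (u ++ N v ++ w)
  normal_iff : ∀ w : List A, N w = w ↔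
    ∀ (u v : List A) (a b : A), w = u ++ a :: b :: v → N [a, b] = [a, b]
  reach : ∀ w : List A, ∃ pos : List ℕ, N w = applySeq N pos w

/-- The normalisation is of left-class `m`. -/
def LeftClass {A : Type*} (N : List A → List A) (m : ℕ) : Prop :=
  ∀ w : List A, w.length = 3 → N w = applySeq N (altSeq 1 m) w

/-- The normalisation is of right-class `n`. -/
def RightClass {A : Type*} (N : List A → List A) (n : ℕ) : Prop :=
  ∀ w : List A, w.length = 3 → N w = applySeq N (altSeq 2 n) w

/-- The normalisation is of class `(m, n)`. -/
def IsClass {A : Type*} (N : List A → List A) (m n : ℕ) : Prop :=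
  LeftClass N m ∧ RightClass N n

/-- `e` is an `N`-neutral element: `N(w|e) = N(e|w) = N(w)|e` for every word `w`. -/
def Neutral {A : Type*} (N : List A → List A) (e : A) : Prop :=
  ∀ w : List A, N (w ++ [e]) = N w ++ [e] ∧ N (e :: w) = N w ++ [e]

/-- The domino rule is valid for the restriction of `N` to length-two words. -/
def DominoRule {A : Type*} (N : List A → List A) : Prop :=
  ∀ s1 s2 s1' s2' t0 t1 t2 : A,
    N [t0, s1] = [s1', t1] → N [t1, s2] = [s2', t2] →
    N [s1, s2] = [s1, s2] → N [s1', t1] = [s1', t1] → N [s2', t2] = [s2', t2] →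
    N [s1', s2'] = [s1', s2']


/-! Applying `N̄` at a position never changes the value of `N`, so a sequence of such steps computes
`N w` exactly when it ends at a normal word. Starting from `t₀|s₁|s₂` with `s₁|s₂` normal, the
right-class steps `2, 1, 2` trace out the two tiles of a domino and end at `s₁'|s₂'|t₂`, whose
normality reduces to that of `s₁'|s₂'`: so right class 3 is the domino rule. Left class 4 then comes
for free, since the steps `1, 2, 1, 2` are one step at position 1 followed by the steps `2, 1, 2`. -/

namespace QuadraticNormalisation

variable {A : Type*} {N : List A → List A}

theorem idem (hN : QuadraticNormalisation N) (w : List A) : N (N w) = N w := by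
  simpa using (hN.mid [] w []).symm

theorem exists_eq_pair (hN : QuadraticNormalisation N) (a b : A) :
    ∃ p q, N [a, b] = [p, q] :=
  List.length_eq_two.1 (hN.len [a, b])

theorem normal_of_eq (hN : QuadraticNormalisation N) {v w : List A} (h : N v = w) :
    N w = w := by
  rw [← h, hN.idem]

theorem normal_triple_iff (hN : QuadraticNormalisation N) {x y z : A} :
    N [x, y, z] = [x, y, z] ↔ N [x, y] = [x, y] ∧ N [y, z] = [y, z] := by
  rw [hN.normal_iff]
  refine ⟨fun h => ⟨h [] [z] x y rfl, h [x] [] y z rfl⟩, ?_⟩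
  rintro ⟨hxy, hyz⟩ u v a b h
  rcases u with _ | ⟨_, _ | ⟨_, u⟩⟩
  · simp only [List.nil_append, List.cons.injEq] at h
    obtain ⟨rfl, rfl, -⟩ := h
    exact hxy
  · simp only [List.cons_append, List.nil_append, List.cons.injEq] at h
    obtain ⟨-, rfl, rfl, -⟩ := h
    exact hyz
  · have := congrArg List.length h
    simp only [List.length_cons, List.length_nil, List.cons_append, List.length_append] at this
    omega

theorem apply_applyAt (hN : QuadraticNormalisation N) {i : ℕ} (hi : 1 ≤ i) (w : List A) :
    N (applyAt N i w) = N w := by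
  have hsplit : w.take (i - 1) ++ (w.drop (i - 1)).take 2 ++ w.drop (i + 1) = w := by
    rw [show i + 1 = i - 1 + 2 by omega, ← List.drop_drop, List.append_assoc,
      List.take_append_drop, List.take_append_drop]
  rw [applyAt, ← hN.mid, hsplit]

theorem apply_applySeq (hN : QuadraticNormalisation N) {pos : List ℕ}
    (hpos : ∀ i ∈ pos, 1 ≤ i) (w : List A) : N (applySeq N pos w) = N w := by
  induction pos generalizing w with
  | nil => rfl
  | cons i pos ih =>
    simp only [List.mem_cons, forall_eq_or_imp] at hpos
    exact (ih hpos.2 _).trans (hN.apply_applyAt hpos.1 w)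

theorem eq_applySeq_iff (hN : QuadraticNormalisation N) {pos : List ℕ}
    (hpos : ∀ i ∈ pos, 1 ≤ i) (w : List A) :
    N w = applySeq N pos w ↔ N (applySeq N pos w) = applySeq N pos w := by
  rw [hN.apply_applySeq hpos]

theorem length_applyAt (hN : QuadraticNormalisation N) {i : ℕ} {w : List A} (hi : 1 ≤ i)
    (hiw : i < w.length) : (applyAt N i w).length = w.length := by
  simp only [applyAt, List.length_append, hN.len, List.length_take, List.length_drop]
  omega

theorem leftClass_succ (hN : QuadraticNormalisation N) {n : ℕ} (h : RightClass N n) :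
    LeftClass N (n + 1) := by
  intro w hw
  calc N w = N (applyAt N 1 w) := (hN.apply_applyAt le_rfl w).symm
    _ = applySeq N (altSeq 2 n) (applyAt N 1 w) :=
      h _ ((hN.length_applyAt le_rfl (by omega)).trans hw)

theorem applyAt_one (a b c : A) : applyAt N 1 [a, b, c] = N [a, b] ++ [c] := by
  simp [applyAt]

theorem applyAt_two (a b c : A) : applyAt N 2 [a, b, c] = a :: N [b, c] := by
  simp [applyAt]

theorem applySeq_altSeq_two_three (w : List A) :
    applySeq N (altSeq 2 3) w = applyAt N 2 (applyAt N 1 (applyAt N 2 w)) :=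
  rfl

theorem rightClass_three_iff (hN : QuadraticNormalisation N) :
    RightClass N 3 ↔ ∀ a b c : A,
      N (applySeq N (altSeq 2 3) [a, b, c]) = applySeq N (altSeq 2 3) [a, b, c] := by
  have hpos : ∀ i ∈ altSeq 2 3, 1 ≤ i := by decide
  refine ⟨fun h a b c => (hN.eq_applySeq_iff hpos _).1 (h _ rfl), fun h w hw => ?_⟩
  obtain ⟨a, b, c, rfl⟩ := List.length_eq_three.1 hw
  exact (hN.eq_applySeq_iff hpos _).2 (h a b c)

theorem rightClass_three_iff_dominoRule (hN : QuadraticNormalisation N) :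
    RightClass N 3 ↔ DominoRule N := by
  rw [hN.rightClass_three_iff]
  constructor
  · intro h s1 s2 s1' s2' t0 t1 t2 e1 e2 n12 _ _
    have hseq : applySeq N (altSeq 2 3) [t0, s1, s2] = [s1', s2', t2] := by
      rw [applySeq_altSeq_two_three, applyAt_two, n12, applyAt_one, e1, List.cons_append,
        List.cons_append, List.nil_append, applyAt_two, e2]
    have hnormal := h t0 s1 s2
    rw [hseq] at hnormal
    exact (hN.normal_triple_iff.1 hnormal).1
  · intro hD a b c
    obtain ⟨b', c', h1⟩ := hN.exists_eq_pair b c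
    obtain ⟨a', b'', h2⟩ := hN.exists_eq_pair a b'
    obtain ⟨b₃, c'', h3⟩ := hN.exists_eq_pair b'' c'
    have hseq : applySeq N (altSeq 2 3) [a, b, c] = [a', b₃, c''] := by
      rw [applySeq_altSeq_two_three, applyAt_two, h1, applyAt_one, h2, List.cons_append,
        List.cons_append, List.nil_append, applyAt_two, h3]
    rw [hseq, hN.normal_triple_iff]
    have hn3 := hN.normal_of_eq h3
    exact ⟨hD b' c' a' b₃ a b'' c'' h2 h3 (hN.normal_of_eq h1) (hN.normal_of_eq h2) hn3, hn3⟩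

end QuadraticNormalisation

/-- a quadratic normalisation is of class `(4,3)` iff the domino
rule is valid for `N̄`. -/
theorem class43_iff_domino {A : Type*} (N : List A → List A)
    (hN : QuadraticNormalisation N) :
    IsClass N 4 3 ↔ DominoRule N := by
  rw [← hN.rightClass_three_iff_dominoRule]
  exact ⟨And.right, fun h => ⟨hN.leftClass_succ h, h⟩⟩
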